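/- arXiv:2011.10340 — 3 statements merged into one kernel-verified Lean document; each statement's English description precedes it below -/
import Mathlib

section
/- The Lie subalgebra Lie(V) ⊂ k[G] is invariant under conjugation by G: for every g ∈ G and x ∈ Lie(V), g x g^{-1} ∈ Lie(V). Thus Lie(V) is a G-subrepresentation of k[G] with the conjugation action. -/
open ExteriorAlgebra

variable (k : Type*) [Field k] {G : Type*} [Group G]
variable {V : Type*} [AddCommGroup V] [Module k V]

/-- The alternating map `v ↦ Σ_p v_1 ∧ … ∧ f(v_p) ∧ … ∧ v_m`, landing in the
exterior algebra. -/
noncomputable def algAlt (f : Module.End k V) (m : ℕ) :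
    V [⋀^Fin m]→ₗ[k] ExteriorAlgebra k V where
  toMultilinearMap :=
    ∑ p : Fin m, (ιMulti k m).toMultilinearMap.compLinearMap
      (Function.update (fun _ : Fin m => (LinearMap.id : V →ₗ[k] V)) p f)
  map_eq_zero_of_eq' := by
    intro v i j hv hij
    show (∑ p : Fin m, (ιMulti k m).toMultilinearMap.compLinearMap
      (Function.update (fun _ : Fin m => (LinearMap.id : V →ₗ[k] V)) p f)) v = 0
    have key : ∀ p : Fin m,
        ((ιMulti k m).toMultilinearMap.compLinearMap
          (Function.update (fun _ : Fin m => (LinearMap.id : V →ₗ[k] V)) p f)) v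
        = ιMulti k m (Function.update v p (f (v p))) := by
      intro p
      have harg : (fun x => (Function.update (fun _ : Fin m => (LinearMap.id : V →ₗ[k] V)) p f x) (v x))
          = Function.update v p (f (v p)) := by
        funext x
        rcases eq_or_ne x p with rfl | hx
        · simp
        · simp [Function.update_of_ne hx]
      rw [MultilinearMap.compLinearMap_apply, harg]
      rfl
    rw [MultilinearMap.sum_apply]
    calc (∑ p : Fin m, ((ιMulti k m).toMultilinearMap.compLinearMap
          (Function.update (fun _ : Fin m => (LinearMap.id : V →ₗ[k] V)) p f)) v)
        = ∑ p ∈ ({i, j} : Finset (Fin m)), ιMulti k m (Function.update v p (f (v p))) := by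
          rw [Finset.sum_congr rfl (fun p _ => key p)]
          refine (Finset.sum_subset (Finset.subset_univ _) ?_).symm
          intro p _ hp
          simp only [Finset.mem_insert, Finset.mem_singleton, not_or] at hp
          exact AlternatingMap.map_eq_zero_of_eq _ _
            (by rw [Function.update_of_ne (Ne.symm ?_), Function.update_of_ne (Ne.symm ?_), hv]
                exacts [hp.2, hp.1]) hij
      _ = 0 := by
          rw [Finset.sum_pair hij]
          have hcomp : Function.update v j (f (v j))
              = (Function.update v i (f (v i))) ∘ Equiv.swap i j := by
            funext x
            rcases eq_or_ne x i with rfl | hxi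
            · show Function.update v j (f (v j)) x = Function.update v x (f (v x)) (Equiv.swap x j x)
              rw [Function.update_of_ne hij, Equiv.swap_apply_left,
                Function.update_of_ne (Ne.symm hij)]
              exact hv
            rcases eq_or_ne x j with rfl | hxj
            · show Function.update v x (f (v x)) x = Function.update v i (f (v i)) (Equiv.swap i x x)
              rw [Function.update_self, Equiv.swap_apply_right, Function.update_self, hv]
            · show Function.update v j (f (v j)) x = Function.update v i (f (v i)) (Equiv.swap i j x)
              rw [Function.update_of_ne hxj, Equiv.swap_apply_of_ne_of_ne hxi hxj,
                Function.update_of_ne hxi]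
          rw [hcomp, AlternatingMap.map_swap _ _ hij, add_neg_cancel]

/-- The derivation `D_f` on the exterior algebra extending `f : V → V`. -/
noncomputable def derOp (f : Module.End k V) :
    ExteriorAlgebra k V →ₗ[k] ExteriorAlgebra k V :=
  ExteriorAlgebra.liftAlternating (fun m => algAlt k f m)

theorem derOp_mem (f : Module.End k V) (m : ℕ) :
    ∀ x ∈ ⋀[k]^m V, derOp k f x ∈ ⋀[k]^m V := by
  intro x hx
  rw [← ExteriorAlgebra.ιMulti_span_fixedDegree] at hx ⊢
  induction hx using Submodule.span_induction with
  | mem x hx =>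
      obtain ⟨v, rfl⟩ := hx
      rw [derOp, ExteriorAlgebra.liftAlternating_apply_ιMulti]
      show (∑ p : Fin m, (ιMulti k m).toMultilinearMap.compLinearMap
        (Function.update (fun _ : Fin m => (LinearMap.id : V →ₗ[k] V)) p f)) v ∈ _
      rw [MultilinearMap.sum_apply]
      refine Submodule.sum_mem _ fun p _ => Submodule.subset_span ⟨_, rfl⟩
  | zero => simp
  | add x y _ _ hx hy => rw [map_add]; exact Submodule.add_mem _ hx hy
  | smul c x _ hx => rw [map_smul]; exact Submodule.smul_mem _ c hx

theorem mapOp_mem (f : Module.End k V) (m : ℕ) :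
    ∀ x ∈ ⋀[k]^m V, (ExteriorAlgebra.map f) x ∈ ⋀[k]^m V := by
  intro x hx
  rw [← ExteriorAlgebra.ιMulti_span_fixedDegree] at hx ⊢
  induction hx using Submodule.span_induction with
  | mem x hx =>
      obtain ⟨v, rfl⟩ := hx
      rw [ExteriorAlgebra.map_apply_ιMulti]
      exact Submodule.subset_span ⟨_, rfl⟩
  | zero => simp
  | add x y _ _ hx hy => rw [map_add]; exact Submodule.add_mem _ hx hy
  | smul c x _ hx => rw [map_smul]; exact Submodule.smul_mem _ c hx

/-- `Grp_m : k[G] → End(Λ^m V)`, the linear extension of `g ↦ (v₁∧…∧vₘ ↦ g v₁∧…∧g vₘ)`. -/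
noncomputable def GrpOp (ρ : Representation k G V) (m : ℕ) :
    MonoidAlgebra k G →ₗ[k] Module.End k (⋀[k]^m V) :=
  Finsupp.lift (Module.End k (⋀[k]^m V)) k G
    (fun g => ((ExteriorAlgebra.map (ρ g)).toLinearMap).restrict (mapOp_mem k (ρ g) m))
      ∘ₗ (MonoidAlgebra.coeffLinearEquiv k).toLinearMap

/-- `Alg_m : k[G] → End(Λ^m V)`, the linear extension of
`g ↦ (v₁∧…∧vₘ ↦ Σ_p v₁∧…∧g vₚ∧…∧vₘ)`. -/
noncomputable def AlgOp (ρ : Representation k G V) (m : ℕ) :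
    MonoidAlgebra k G →ₗ[k] Module.End k (⋀[k]^m V) :=
  Finsupp.lift (Module.End k (⋀[k]^m V)) k G
    (fun g => (derOp k (ρ g)).restrict (derOp_mem k (ρ g) m))
      ∘ₗ (MonoidAlgebra.coeffLinearEquiv k).toLinearMap

/-- `x ∈ k[G]` is a Lie element for the representation `ρ` if `Grp_m x = Alg_m x`
for all `m = 0, 1, …, dim V`. -/
def IsLieElement (ρ : Representation k G V) (x : MonoidAlgebra k G) : Prop :=
  ∀ m ≤ Module.finrank k V, GrpOp k ρ m x = AlgOp k ρ m x

/-!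
`Grp_m` is the linear extension of the action of `G` on `Λ^m V`, so conjugating its argument by
`g` conjugates its value by `Grp_m(g)`. The same holds for `Alg_m`: transporting the derivation
`D_f` along the algebra automorphism `Λ(ρ g)` gives `D_{ρ(g) f ρ(g)⁻¹}`. Hence the identity
`Grp_m(x) = Alg_m(x)` is carried over to `g x g⁻¹`.
-/

lemma derOp_apply_ιMulti (f : Module.End k V) {m : ℕ} (v : Fin m → V) :
    derOp k f (ιMulti k m v) = ∑ p : Fin m, ιMulti k m (Function.update v p (f (v p))) := by
  simp only [derOp, liftAlternating_apply_ιMulti, algAlt, AlternatingMap.coe_mk, sum_apply,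
    MultilinearMap.compLinearMap_apply]
  refine Finset.sum_congr rfl fun p _ ↦ congrArg _ (funext fun i ↦ ?_)
  rcases eq_or_ne i p with rfl | hip <;> simp [*]

theorem map_comp_derOp_comp_map {W : Type*} [AddCommGroup W] [Module k W]
    {A : W →ₗ[k] V} {B : V →ₗ[k] W} (hAB : A ∘ₗ B = LinearMap.id) (f : Module.End k W) :
    (map A).toLinearMap ∘ₗ derOp k f ∘ₗ (map B).toLinearMap = derOp k (A ∘ₗ f ∘ₗ B) := by
  ext n v
  have hv : A ∘ B ∘ v = v := funext fun i ↦ LinearMap.congr_fun hAB (v i)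
  simp only [LinearMap.compAlternatingMap_apply, LinearMap.comp_apply, AlgHom.toLinearMap_apply,
    map_apply_ιMulti, derOp_apply_ιMulti, map_sum, Function.comp_update, hv]
  rfl

theorem MonoidAlgebra.apply_of_mul_mul_of {R M A : Type*} [CommSemiring R] [Monoid M]
    [Semiring A] [Algebra R A] (Φ : MonoidAlgebra R M →ₗ[R] A) {a b : M} {P Q : A}
    (hΦ : ∀ c, Φ (MonoidAlgebra.of R M (a * c * b)) = P * Φ (MonoidAlgebra.of R M c) * Q)
    (y : MonoidAlgebra R M) :
    Φ (MonoidAlgebra.of R M a * y * MonoidAlgebra.of R M b) = P * Φ y * Q := by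
  induction y using MonoidAlgebra.induction_linear with
  | zero => simp
  | add y z hy hz => simp only [mul_add, add_mul, map_add, hy, hz]
  | single c r =>
    rw [← MonoidAlgebra.smul_of, mul_smul_comm, smul_mul_assoc, map_smul, map_smul, ← map_mul,
      ← map_mul, hΦ, mul_smul_comm, smul_mul_assoc]

lemma GrpOp_of (ρ : Representation k G V) (m : ℕ) (h : G) :
    GrpOp k ρ m (MonoidAlgebra.of k G h) =
      (map (ρ h)).toLinearMap.restrict (mapOp_mem k (ρ h) m) := by
  simp [GrpOp]

lemma AlgOp_of (ρ : Representation k G V) (m : ℕ) (h : G) :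
    AlgOp k ρ m (MonoidAlgebra.of k G h) = (derOp k (ρ h)).restrict (derOp_mem k (ρ h) m) := by
  simp [AlgOp]

lemma map_conj (ρ : Representation k G V) (g h : G) :
    (map (ρ (g * h * g⁻¹))).toLinearMap =
      (map (ρ g)).toLinearMap ∘ₗ (map (ρ h)).toLinearMap ∘ₗ (map (ρ g⁻¹)).toLinearMap := by
  rw [map_mul, map_mul, mul_assoc, Module.End.mul_eq_comp, Module.End.mul_eq_comp,
    ← map_comp_map, ← map_comp_map]
  rfl

lemma derOp_conj (ρ : Representation k G V) (g h : G) :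
    derOp k (ρ (g * h * g⁻¹)) =
      (map (ρ g)).toLinearMap ∘ₗ derOp k (ρ h) ∘ₗ (map (ρ g⁻¹)).toLinearMap := by
  have hg : ρ g ∘ₗ ρ g⁻¹ = LinearMap.id := by
    ext v
    simp
  rw [map_comp_derOp_comp_map k hg, map_mul, map_mul, mul_assoc, Module.End.mul_eq_comp,
    Module.End.mul_eq_comp]

lemma GrpOp_of_mul_mul_of (ρ : Representation k G V) (m : ℕ) (g : G) (y : MonoidAlgebra k G) :
    GrpOp k ρ m (MonoidAlgebra.of k G g * y * MonoidAlgebra.of k G g⁻¹) =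
      GrpOp k ρ m (MonoidAlgebra.of k G g) * GrpOp k ρ m y *
        GrpOp k ρ m (MonoidAlgebra.of k G g⁻¹) :=
  MonoidAlgebra.apply_of_mul_mul_of _ (fun h ↦ by simp only [GrpOp_of, map_conj]; rfl) y

lemma AlgOp_of_mul_mul_of (ρ : Representation k G V) (m : ℕ) (g : G) (y : MonoidAlgebra k G) :
    AlgOp k ρ m (MonoidAlgebra.of k G g * y * MonoidAlgebra.of k G g⁻¹) =
      GrpOp k ρ m (MonoidAlgebra.of k G g) * AlgOp k ρ m y *
        GrpOp k ρ m (MonoidAlgebra.of k G g⁻¹) :=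
  MonoidAlgebra.apply_of_mul_mul_of _
    (fun h ↦ by simp only [GrpOp_of, AlgOp_of, derOp_conj]; rfl) y

/-- `Lie(V)` is invariant under conjugation by `G`: for `g ∈ G` and a Lie element `x`,
`g x g⁻¹` is again a Lie element; thus `Lie(V)` is a `G`-subrepresentation of `k[G]`
under the conjugation action. -/
theorem isLieElement_conj {k : Type*} [Field k] {G : Type*} [Group G]
    {V : Type*} [AddCommGroup V] [Module k V]
    (ρ : Representation k G V) (g : G) (x : MonoidAlgebra k G)
    (hx : IsLieElement k ρ x) :
    IsLieElement k ρ
      (MonoidAlgebra.of k G g * x * MonoidAlgebra.of k G g⁻¹) := by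
  intro m hm
  rw [GrpOp_of_mul_mul_of, AlgOp_of_mul_mul_of, hx m hm]
end

section
/- For any n×n matrix A = (a_{ij}), sdet(A, I) = (−1)^n Σ_{σ ∈ S_n} (−2)^{ν(σ)} a_{1σ(1)} ⋯ a_{nσ(n)}, where ν(σ) is the number of cycles of σ (including fixed points) and I is the identity matrix. -/
/-!
Row `i` of the `I`-shuffle of `A` and `1` is a row of the identity when `i ∉ I`, so that shuffle
is block triangular and its determinant is the principal minor of `A` on `I`. Hence
`sdet(A, 1) = Σ_I det A_I · det A_{Iᶜ}`. Expanding both minors, a pair of permutations of `I` and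
of `Iᶜ` is the same thing as one permutation `σ` with `σ • I = I`, so after exchanging the sums
each term `sgn σ · ∏ a_{iσ(i)}` is counted once for every `σ`-invariant `I`. These are the unions
of cycles of `σ` (fixed points included), so there are `2 ^ ν(σ)` of them, and
`sgn σ = (-1) ^ (n + ν(σ))` finishes the computation.
-/

/-- The `I`-shuffle of `A` and `B`: the matrix whose `i`-th row is the `i`-th row of `A`
if `i ∈ I` and the `i`-th row of `B` otherwise. -/
def shuffleMatrix {n : ℕ} {R : Type*} (A B : Matrix (Fin n) (Fin n) R)
    (I : Finset (Fin n)) : Matrix (Fin n) (Fin n) R :=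
  fun i j => if i ∈ I then A i j else B i j

/-- The shuffle determinant `sdet(A,B) = Σ_I det((A,B)_I) det((A,B)_{Ī})`. -/
def sdet {n : ℕ} {R : Type*} [CommRing R] (A B : Matrix (Fin n) (Fin n) R) : R :=
  ∑ I : Finset (Fin n), (shuffleMatrix A B I).det * (shuffleMatrix A B Iᶜ).det

/-- The number of cycles of a permutation, including fixed points. -/
def numCycles {n : ℕ} (σ : Equiv.Perm (Fin n)) : ℕ :=
  Multiset.card σ.cycleType + (Finset.univ.filter fun i => σ i = i).card

open Finset Equiv Equiv.Perm
open scoped Pointwise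

theorem Finset.card_filter_saturated {α β : Type*} [Fintype α] [DecidableEq α] [Fintype β]
    [DecidableEq β] (g : α → β) (hg : Function.Surjective g) :
    #{I : Finset α | ∀ x y, g x = g y → x ∈ I → y ∈ I} = 2 ^ Fintype.card β := by
  rw [← Fintype.card_finset, ← card_univ]
  refine card_nbij' (fun I => I.image g) (fun S => ({x | g x ∈ S} : Finset α)) (by simp)
    (fun S _ => by simp +contextual) (fun I hI => ?_) (fun S _ => ?_)
  · simp only [coe_filter, mem_univ, true_and, Set.mem_ofPred_eq] at hI
    ext y
    simpa using ⟨fun ⟨x, hx, hxy⟩ => hI x y hxy hx, fun hy => ⟨y, hy, rfl⟩⟩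
  · ext b
    obtain ⟨x, rfl⟩ := hg b
    simpa using ⟨fun ⟨y, hy, hyx⟩ => hyx ▸ hy, fun hx => ⟨x, hx, rfl⟩⟩

namespace Equiv.Perm

variable {α : Type*}

def subtypeCongrEquiv (p : α → Prop) [DecidablePred p] :
    Perm {a // p a} × Perm {a // ¬p a} ≃ {f : Perm α // ∀ x, p (f x) ↔ p x} where
  toFun e := ⟨e.1.subtypeCongr e.2, fun x => by
    by_cases hx : p x
    · simpa [subtypeCongr.left_apply, hx] using (e.1 ⟨x, hx⟩).2
    · simpa [subtypeCongr.right_apply, hx] using (e.2 ⟨x, hx⟩).2⟩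
  invFun f := (f.1.subtypePerm f.2, f.1.subtypePerm fun x => not_congr (f.2 x))
  left_inv e := by
    ext <;> simp [subtypeCongr.left_apply_subtype, subtypeCongr.right_apply_subtype]
  right_inv f := by
    ext x
    by_cases hx : p x <;> simp [subtypeCongr.left_apply, subtypeCongr.right_apply, hx]

variable [DecidableEq α]

theorem smul_finset_eq_self_iff {f : Perm α} {s : Finset α} :
    f • s = s ↔ ∀ x, f x ∈ s ↔ x ∈ s := by
  refine ⟨fun h x => ?_, fun h => ?_⟩
  · conv_lhs => rw [← h]
    exact smul_mem_smul_finset_iff f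
  · ext x
    rw [← inv_smul_mem_iff, ← h]
    simp

theorem SameCycle.mem_iff_mem {f : Perm α} {s : Finset α} (hs : f • s = s) {x y : α}
    (h : f.SameCycle x y) : x ∈ s ↔ y ∈ s := by
  obtain ⟨k, rfl⟩ := h
  have hk : (f ^ k) • s = s :=
    MulAction.mem_stabilizer_iff.1 (zpow_mem (MulAction.mem_stabilizer_iff.2 hs) k)
  rw [← smul_mem_smul_finset_iff (f ^ k), hk, Perm.smul_def]

variable [Fintype α]

-- `cycleFactorsFinset` omits the one-point cycles, hence the fixed points as a separate summand.
def cycleOrFixedPoint (f : Perm α) (x : α) : {x // f x = x} ⊕ f.cycleFactorsFinset :=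
  if h : f x = x then .inl ⟨x, h⟩
  else .inr ⟨f.cycleOf x, cycleOf_mem_cycleFactorsFinset_iff.2 (mem_support.2 h)⟩

theorem cycleOrFixedPoint_eq_iff {f : Perm α} {x y : α} :
    f.cycleOrFixedPoint x = f.cycleOrFixedPoint y ↔ f.SameCycle x y := by
  by_cases hx : f x = x <;> by_cases hy : f y = y <;>
    simp only [cycleOrFixedPoint, hx, hy, dite_true, dite_false, Sum.inl.injEq, Sum.inr.injEq,
      reduceCtorEq, false_iff, Subtype.mk.injEq]
  · exact ⟨fun h => h ▸ SameCycle.rfl, fun h => h.eq_of_left hx⟩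
  · exact fun h => hy (h.apply_eq_self_iff.1 hx)
  · exact fun h => hx (h.apply_eq_self_iff.2 hy)
  · exact (sameCycle_iff_cycleOf_eq_of_mem_support (mem_support.2 hx) (mem_support.2 hy)).symm

theorem cycleOrFixedPoint_surjective (f : Perm α) : Function.Surjective f.cycleOrFixedPoint := by
  rintro (⟨x, hx⟩ | ⟨c, hc⟩)
  · exact ⟨x, by simp [cycleOrFixedPoint, hx]⟩
  · obtain ⟨x, hx⟩ := (mem_cycleFactorsFinset_iff.1 hc).1.nonempty_support
    have hfx : f x ≠ x := mem_support.1 (mem_cycleFactorsFinset_support_le hc hx)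
    exact ⟨x, by simp [cycleOrFixedPoint, hfx, ← cycle_is_cycleOf hx hc]⟩

theorem card_filter_smul_finset_eq_self (f : Perm α) :
    #{I : Finset α | f • I = I} =
      2 ^ (Multiset.card f.cycleType + #{x | f x = x}) := by
  have hinv : ∀ I : Finset α, f • I = I ↔
      ∀ x y, f.cycleOrFixedPoint x = f.cycleOrFixedPoint y → x ∈ I → y ∈ I := by
    refine fun I => ⟨fun hI x y hxy => ((cycleOrFixedPoint_eq_iff.1 hxy).mem_iff_mem hI).1,
      fun hI => smul_finset_eq_self_iff.2 fun x => ⟨hI _ _ ?_, hI _ _ ?_⟩⟩ <;>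
      simp [cycleOrFixedPoint_eq_iff, sameCycle_apply_left, sameCycle_apply_right, SameCycle.rfl]
  rw [filter_congr fun I _ => hinv I, card_filter_saturated _ (cycleOrFixedPoint_surjective f),
    Fintype.card_sum, Fintype.card_subtype, Fintype.card_coe, cycleType_def, Multiset.card_map,
    add_comm]
  rfl

end Equiv.Perm

namespace Matrix

variable {α R : Type*} [DecidableEq α]

theorem toSquareBlockProp_one [Zero R] [One R] (p : α → Prop) :
    (1 : Matrix α α R).toSquareBlockProp p = 1 :=
  toBlock_one_self p

variable [Fintype α] [CommRing R]

theorem det_toSquareBlockProp_mul_det_toSquareBlockProp_not (p : α → Prop) [DecidablePred p]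
    (M : Matrix α α R) :
    (M.toSquareBlockProp p).det * (M.toSquareBlockProp fun i => ¬p i).det =
      ∑ σ : Perm α with ∀ x, p (σ x) ↔ p x, sign σ • ∏ i, M i (σ i) := by
  rw [← det_transpose, ← det_transpose (M.toSquareBlockProp _), det_apply, det_apply, sum_mul_sum,
    ← Fintype.sum_prod_type', sum_subtype _ fun σ => mem_filter_univ σ]
  refine Fintype.sum_equiv (subtypeCongrEquiv p) _ _ fun e => ?_
  simp [smul_mul_smul_comm, subtypeCongrEquiv, sign_subtypeCongr, toSquareBlockProp_def,
    ← Fintype.prod_subtype_mul_prod_subtype p]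

end Matrix

section Shuffle

open Matrix

variable {n : ℕ} {R : Type*}

theorem toSquareBlockProp_shuffleMatrix_of_mem {A B : Matrix (Fin n) (Fin n) R}
    {I : Finset (Fin n)} {p : Fin n → Prop} (hp : ∀ i, p i → i ∈ I) :
    (shuffleMatrix A B I).toSquareBlockProp p = A.toSquareBlockProp p := by
  ext i j
  simp [toSquareBlockProp_def, shuffleMatrix, hp i i.2]

theorem toSquareBlockProp_shuffleMatrix_of_notMem {A B : Matrix (Fin n) (Fin n) R}
    {I : Finset (Fin n)} {p : Fin n → Prop} (hp : ∀ i, p i → i ∉ I) :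
    (shuffleMatrix A B I).toSquareBlockProp p = B.toSquareBlockProp p := by
  ext i j
  simp [toSquareBlockProp_def, shuffleMatrix, hp i i.2]

theorem det_shuffleMatrix_one_mul_det_shuffleMatrix_one_compl [CommRing R]
    (A : Matrix (Fin n) (Fin n) R) (I : Finset (Fin n)) :
    (shuffleMatrix A 1 I).det * (shuffleMatrix A 1 Iᶜ).det =
      ∑ σ : Perm (Fin n) with σ • I = I, sign σ • ∏ i, A i (σ i) := by
  have hI : ∀ i ∉ I, ∀ j ∈ I, shuffleMatrix A 1 I i j = 0 := fun i hi j hj => by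
    simp [shuffleMatrix, hi, one_apply_ne (ne_of_mem_of_not_mem hj hi).symm]
  have hIc : ∀ i ∈ I, ∀ j ∉ I, shuffleMatrix A 1 Iᶜ i j = 0 := fun i hi j hj => by
    simp [shuffleMatrix, hi, one_apply_ne (ne_of_mem_of_not_mem hi hj)]
  rw [twoBlockTriangular_det _ (· ∈ I) hI, twoBlockTriangular_det' _ (· ∈ I) hIc,
    toSquareBlockProp_shuffleMatrix_of_mem fun _ => id,
    toSquareBlockProp_shuffleMatrix_of_notMem fun _ => id,
    toSquareBlockProp_shuffleMatrix_of_notMem fun _ => notMem_compl.2,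
    toSquareBlockProp_shuffleMatrix_of_mem fun _ => mem_compl.2,
    toSquareBlockProp_one, toSquareBlockProp_one]
  simp only [det_one, mul_one, one_mul]
  rw [det_toSquareBlockProp_mul_det_toSquareBlockProp_not]
  refine sum_congr (ext fun σ => ?_) fun _ _ => rfl
  simp [smul_finset_eq_self_iff]

end Shuffle

theorem sign_eq_neg_one_pow_add_numCycles {n : ℕ} (σ : Perm (Fin n)) :
    sign σ = (-1) ^ (n + numCycles σ) := by
  have hsupp : #σ.support + #{i | σ i = i} = n := by
    rw [add_comm]
    exact (card_filter_add_card_filter_not _).trans (card_fin n)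
  have hexp : n + numCycles σ =
      σ.cycleType.sum + Multiset.card σ.cycleType + 2 * #{i | σ i = i} := by
    rw [numCycles, sum_cycleType]
    omega
  rw [sign_of_cycleType, hexp, pow_add _ _ (2 * _), pow_mul, Int.units_sq, one_pow, mul_one]

/-- `sdet(A, 1) = (−1)^n Σ_{σ ∈ S_n} (−2)^{ν(σ)} a_{1σ(1)} ⋯ a_{nσ(n)}` where `ν(σ)` is
the number of cycles of `σ` (including fixed points). -/
theorem sdet_one {n : ℕ} {R : Type*} [CommRing R] (A : Matrix (Fin n) (Fin n) R) :
    sdet A 1 = (-1 : R) ^ n *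
      ∑ σ : Equiv.Perm (Fin n), (-2 : R) ^ numCycles σ * ∏ i, A i (σ i) := by
  have hsdet : sdet A 1 = ∑ σ : Perm (Fin n), 2 ^ numCycles σ • sign σ • ∏ i, A i (σ i) := by
    simp only [sdet, det_shuffleMatrix_one_mul_det_shuffleMatrix_one_compl, sum_filter]
    rw [sum_comm]
    simp only [← sum_filter, sum_const, card_filter_smul_finset_eq_self, numCycles]
  rw [hsdet, mul_sum]
  refine sum_congr rfl fun σ _ => ?_
  rw [sign_eq_neg_one_pow_add_numCycles, neg_pow (2 : R), pow_add]
  simp [Units.smul_def]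
  ring
end

section
/- Let ι_n : ℂ[S_n] → ℂ[S_{n+1}] be the algebra homomorphism induced by the embedding of S_n into S_{n+1} as the stabilizer of n+1. Then ι_n maps Lie elements to Lie elements: if u ∈ ℂ[S_n] satisfies Grp_m(u) = Alg_m(u) on Λ^m ℂ^n for all m ≤ n, then ι_n(u) satisfies Grp_m(ι_n(u)) = Alg_m(ι_n(u)) on Λ^m ℂ^{n+1} for all m ≤ n+1. -/
/-!
Write `e` for the last basis vector of `ℂ^{n+1}`. It is fixed by the image of `S_n`, and
`ℂ^{n+1} = ℂ^n ⊕ ℂ e` with `S_n` acting on `ℂ^n` as before, so every element of `Λ ℂ^{n+1}` has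
the form `a + e ∧ b` with `a, b` in the image of `Λ ℂ^n`. On that image `Grp(ι_n u)` and
`Alg(ι_n u)` are transported from `Grp(u) = Alg(u)`, which holds in all degrees since
`Λ^m ℂ^n = 0` for `m > n`. Finally `Grp(x)(e ∧ y) = e ∧ Grp(x) y`, while
`Alg(x)(e ∧ y) = (Σ a_σ) e ∧ y + e ∧ Alg(x) y`, and `Σ a_σ = 0` is the degree-zero case of the
hypothesis.
-/

open ExteriorAlgebra

variable (k : Type*) [Field k] {G : Type*} [Group G]
variable {V : Type*} [AddCommGroup V] [Module k V]

/-- The permutation representation of `S_n` on `ℂ^n`: `σ` sends the basis vector `v_p`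
to `v_{σ(p)}`, i.e. `(σ·x) i = x (σ⁻¹ i)`. -/
noncomputable def permRep (n : ℕ) : Representation ℂ (Equiv.Perm (Fin n)) (Fin n → ℂ) where
  toFun σ := LinearMap.funLeft ℂ ℂ ⇑σ⁻¹
  map_one' := by
    ext v i
    simp
  map_mul' σ τ := by
    refine LinearMap.ext fun v => funext fun i => ?_
    simp [LinearMap.funLeft_apply, Equiv.Perm.mul_apply, mul_inv_rev, Module.End.mul_apply]

/-- The embedding `S_n ↪ S_{n+1}` as the stabilizer of `n+1`, extended linearly to the
group algebras: `ι_n : ℂ[S_n] → ℂ[S_{n+1}]`. -/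
noncomputable def iotaAlg (n : ℕ) :
    MonoidAlgebra ℂ (Equiv.Perm (Fin n)) → MonoidAlgebra ℂ (Equiv.Perm (Fin (n + 1))) :=
  MonoidAlgebra.mapDomain
    (Equiv.Perm.viaEmbeddingHom (Fin.castSuccEmb : Fin n ↪ Fin (n + 1)))


variable {k} {W : Type*} [AddCommGroup W] [Module k W] {H : Type*} [Group H]

theorem derOp_ιMulti (f : Module.End k V) {m : ℕ} (v : Fin m → V) :
    derOp k f (ιMulti k m v) = ∑ p, ιMulti k m (Function.update v p (f (v p))) := by
  rw [derOp, liftAlternating_apply_ιMulti]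
  change (∑ p : Fin m, (ιMulti k m).toMultilinearMap.compLinearMap _) v = _
  simp only [sum_apply, MultilinearMap.compLinearMap_apply]
  refine Finset.sum_congr rfl fun p _ => congrArg (ιMulti k m) (funext fun i => ?_)
  rcases eq_or_ne i p with rfl | h <;> simp [*]

theorem derOp_one (f : Module.End k V) : derOp k f 1 = 0 := by
  simpa using derOp_ιMulti f (Fin.elim0 : Fin 0 → V)

theorem ι_mul_ιMulti (v : V) {m : ℕ} (w : Fin m → V) :
    ι k v * ιMulti k m w = ιMulti k (m + 1) (Fin.cons v w) := by
  rw [ιMulti_succ_apply]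
  rfl

theorem derOp_ι_mul (f : Module.End k V) (v : V) (y : ExteriorAlgebra k V) :
    derOp k f (ι k v * y) = ι k (f v) * y + ι k v * derOp k f y := by
  suffices derOp k f ∘ₗ LinearMap.mulLeft k (ι k v) =
      LinearMap.mulLeft k (ι k (f v)) + LinearMap.mulLeft k (ι k v) ∘ₗ derOp k f from
    LinearMap.congr_fun this y
  refine lhom_ext fun m => AlternatingMap.ext fun w => ?_
  simp only [LinearMap.compAlternatingMap_apply, LinearMap.comp_apply, LinearMap.add_apply,
    LinearMap.mulLeft_apply, ι_mul_ιMulti, derOp_ιMulti, Fin.sum_univ_succ, Finset.mul_sum,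
    Fin.cons_zero, Fin.cons_succ, Fin.update_cons_zero, Fin.cons_update]

theorem map_derOp_of_comp_eq (f : V →ₗ[k] W) {g : Module.End k V} {g' : Module.End k W}
    (h : f ∘ₗ g = g' ∘ₗ f) (y : ExteriorAlgebra k V) :
    map f (derOp k g y) = derOp k g' (map f y) := by
  suffices (map f).toLinearMap ∘ₗ derOp k g = derOp k g' ∘ₗ (map f).toLinearMap from
    LinearMap.congr_fun this y
  refine lhom_ext fun m => AlternatingMap.ext fun w => ?_
  simp only [LinearMap.compAlternatingMap_apply, LinearMap.comp_apply, AlgHom.toLinearMap_apply,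
    derOp_ιMulti, map_sum, map_apply_ιMulti, Function.comp_update, Function.comp_apply]
  refine Finset.sum_congr rfl fun p _ => ?_
  rw [← LinearMap.comp_apply, h, LinearMap.comp_apply]

-- `Grp(x)` and `Alg(x)` on the whole exterior algebra, rather than on a single degree.
noncomputable def grpEnd (ρ : Representation k G V) (x : MonoidAlgebra k G) :
    Module.End k (ExteriorAlgebra k V) :=
  x.coeff.sum fun g a => a • (map (ρ g)).toLinearMap

noncomputable def algEnd (ρ : Representation k G V) (x : MonoidAlgebra k G) :
    Module.End k (ExteriorAlgebra k V) :=
  x.coeff.sum fun g a => a • derOp k (ρ g)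

theorem grpEnd_apply (ρ : Representation k G V) (x : MonoidAlgebra k G)
    (y : ExteriorAlgebra k V) : grpEnd ρ x y = x.coeff.sum fun g a => a • map (ρ g) y :=
  LinearMap.finsupp_sum_apply _ _ _

theorem algEnd_apply (ρ : Representation k G V) (x : MonoidAlgebra k G)
    (y : ExteriorAlgebra k V) : algEnd ρ x y = x.coeff.sum fun g a => a • derOp k (ρ g) y :=
  LinearMap.finsupp_sum_apply _ _ _

theorem coe_GrpOp_apply (ρ : Representation k G V) (m : ℕ) (x : MonoidAlgebra k G)
    (y : ⋀[k]^m V) : (GrpOp k ρ m x y : ExteriorAlgebra k V) = grpEnd ρ x y := by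
  simp only [GrpOp, LinearMap.coe_comp, LinearEquiv.coe_coe, Function.comp_apply,
    MonoidAlgebra.coeffLinearEquiv_apply, Finsupp.lift_apply, Finsupp.sum, LinearMap.coe_sum,
    LinearMap.coe_smul, Finset.sum_apply, Pi.smul_apply, AddSubmonoidClass.coe_finsetSum,
    SetLike.val_smul, grpEnd_apply]
  rfl

theorem coe_AlgOp_apply (ρ : Representation k G V) (m : ℕ) (x : MonoidAlgebra k G)
    (y : ⋀[k]^m V) : (AlgOp k ρ m x y : ExteriorAlgebra k V) = algEnd ρ x y := by
  simp only [AlgOp, LinearMap.coe_comp, LinearEquiv.coe_coe, Function.comp_apply,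
    MonoidAlgebra.coeffLinearEquiv_apply, Finsupp.lift_apply, Finsupp.sum, LinearMap.coe_sum,
    LinearMap.coe_smul, Finset.sum_apply, Pi.smul_apply, AddSubmonoidClass.coe_finsetSum,
    SetLike.val_smul, LinearMap.coe_restrict_apply, algEnd_apply]

theorem GrpOp_eq_AlgOp_iff (ρ : Representation k G V) (m : ℕ) (x : MonoidAlgebra k G) :
    GrpOp k ρ m x = AlgOp k ρ m x ↔ ∀ y ∈ ⋀[k]^m V, grpEnd ρ x y = algEnd ρ x y := by
  refine ⟨fun h y hy => ?_, fun h => LinearMap.ext fun y => Subtype.ext ?_⟩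
  · rw [← coe_GrpOp_apply ρ m x ⟨y, hy⟩, ← coe_AlgOp_apply ρ m x ⟨y, hy⟩, h]
  · rw [coe_GrpOp_apply, coe_AlgOp_apply, h y y.2]

theorem IsLieElement.grpEnd_eq_algEnd [FiniteDimensional k V] {ρ : Representation k G V}
    {x : MonoidAlgebra k G} (hx : IsLieElement k ρ x) : grpEnd ρ x = algEnd ρ x := by
  refine lhom_ext fun m => AlternatingMap.ext fun v => ?_
  simp only [LinearMap.compAlternatingMap_apply]
  by_cases hm : m ≤ Module.finrank k V
  · exact (GrpOp_eq_AlgOp_iff ρ m x).1 (hx m hm) _ (ιMulti_range k m ⟨v, rfl⟩)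
  · have hv : ¬LinearIndependent k v := fun hli => hm (by simpa using hli.fintype_card_le_finrank)
    rw [AlternatingMap.map_linearDependent _ v hv, map_zero, map_zero]

theorem grpEnd_one (ρ : Representation k G V) (x : MonoidAlgebra k G) :
    grpEnd ρ x 1 = (x.coeff.sum fun _ a => a) • 1 := by
  simp [grpEnd_apply, Finsupp.sum, Finset.sum_smul]

theorem algEnd_one (ρ : Representation k G V) (x : MonoidAlgebra k G) :
    algEnd ρ x 1 = 0 := by
  simp [algEnd_apply, derOp_one]

theorem grpEnd_ι_mul_of_fixed {ρ : Representation k G V} {c : V} (hc : ∀ g, ρ g c = c)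
    (x : MonoidAlgebra k G) (y : ExteriorAlgebra k V) :
    grpEnd ρ x (ι k c * y) = ι k c * grpEnd ρ x y := by
  simp [grpEnd_apply, Finsupp.sum, hc, Finset.mul_sum]

theorem algEnd_ι_mul_of_fixed {ρ : Representation k G V} {c : V} (hc : ∀ g, ρ g c = c)
    (x : MonoidAlgebra k G) (y : ExteriorAlgebra k V) :
    algEnd ρ x (ι k c * y) = (x.coeff.sum fun _ a => a) • (ι k c * y) + ι k c * algEnd ρ x y := by
  simp [algEnd_apply, Finsupp.sum, derOp_ι_mul, hc, Finset.mul_sum, Finset.sum_smul,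
    Finset.sum_add_distrib]

theorem grpEnd_mapDomain (φ : G →* H) (ρ : Representation k H V) (x : MonoidAlgebra k G) :
    grpEnd ρ (MonoidAlgebra.mapDomain φ x) = grpEnd (ρ.comp φ) x :=
  Finsupp.sum_mapDomain_index (fun _ => zero_smul k _) fun _ _ _ => add_smul _ _ _

theorem algEnd_mapDomain (φ : G →* H) (ρ : Representation k H V) (x : MonoidAlgebra k G) :
    algEnd ρ (MonoidAlgebra.mapDomain φ x) = algEnd (ρ.comp φ) x :=
  Finsupp.sum_mapDomain_index (fun _ => zero_smul k _) fun _ _ _ => add_smul _ _ _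

theorem map_grpEnd_of_comp_eq {ρ : Representation k G V} {ρ' : Representation k G W}
    {f : V →ₗ[k] W} (hf : ∀ g, f ∘ₗ ρ g = ρ' g ∘ₗ f) (x : MonoidAlgebra k G)
    (y : ExteriorAlgebra k V) : map f (grpEnd ρ x y) = grpEnd ρ' x (map f y) := by
  simp only [grpEnd_apply, map_finsuppSum, map_smul, ← AlgHom.comp_apply, map_comp_map, hf]

theorem map_algEnd_of_comp_eq {ρ : Representation k G V} {ρ' : Representation k G W}
    {f : V →ₗ[k] W} (hf : ∀ g, f ∘ₗ ρ g = ρ' g ∘ₗ f) (x : MonoidAlgebra k G)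
    (y : ExteriorAlgebra k V) : map f (algEnd ρ x y) = algEnd ρ' x (map f y) := by
  simp only [algEnd_apply, map_finsuppSum, map_smul, map_derOp_of_comp_eq f (hf _)]

theorem exists_eq_map_add_ι_mul_map {f : W →ₗ[k] V} {c : V}
    (hfc : ∀ v, ∃ w, ∃ t : k, v = f w + t • c) (y : ExteriorAlgebra k V) :
    ∃ a b, y = map f a + ι k c * map f b := by
  induction y using CliffordAlgebra.left_induction with
  | algebraMap r => exact ⟨algebraMap k _ r, 0, by simp⟩
  | add y y' hy hy' =>
    obtain ⟨a, b, rfl⟩ := hy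
    obtain ⟨a', b', rfl⟩ := hy'
    exact ⟨a + a', b + b', by simp only [map_add, mul_add]; abel⟩
  | ι_mul y v hy =>
    show ∃ a b, ι k v * y = map f a + ι k c * map f b
    obtain ⟨a, b, rfl⟩ := hy
    obtain ⟨w, t, rfl⟩ := hfc v
    -- `(f w + t c) ∧ (f a + c ∧ f b) = f (w ∧ a) + c ∧ f (t a - w ∧ b)` as `c ∧ c = 0`
    refine ⟨ι k w * a, t • a - ι k w * b, ?_⟩
    have hanti : ι k (f w) * ι k c = -(ι k c * ι k (f w)) :=
      eq_neg_of_add_eq_zero_left (ι_add_mul_swap _ _)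
    simp only [map_add, map_smul, map_sub, map_mul, map_apply_ι, add_mul, mul_add, mul_sub,
      smul_mul_assoc, mul_smul_comm, ← mul_assoc, hanti, ι_sq_zero, smul_zero, add_zero, neg_mul]
    abel

theorem sum_coeff_eq_zero_of_grpEnd_eq_algEnd {ρ : Representation k G V} {x : MonoidAlgebra k G}
    (h : grpEnd ρ x = algEnd ρ x) : (x.coeff.sum fun _ a => a) = 0 := by
  have h1 := LinearMap.congr_fun h 1
  rw [grpEnd_one, algEnd_one, smul_eq_zero] at h1
  exact h1.resolve_right one_ne_zero

theorem extendByZero_comp_permRep {n m : ℕ} (e : Fin n ↪ Fin m) (σ : Equiv.Perm (Fin n)) :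
    Function.ExtendByZero.linearMap ℂ e ∘ₗ permRep n σ =
      permRep m (Equiv.Perm.viaEmbeddingHom e σ) ∘ₗ Function.ExtendByZero.linearMap ℂ e := by
  refine LinearMap.ext fun v => funext fun i => ?_
  simp only [permRep, LinearMap.comp_apply, MonoidHom.coe_mk, OneHom.coe_mk,
    Function.ExtendByZero.linearMap_apply, LinearMap.funLeft_apply, Equiv.Perm.inv_def]
  by_cases hi : ∃ a, e a = i
  · obtain ⟨a, rfl⟩ := hi
    have hsymm : (Equiv.Perm.viaEmbeddingHom e σ).symm (e a) = e (σ.symm a) := by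
      rw [Equiv.symm_apply_eq, Equiv.Perm.viaEmbeddingHom_apply, Equiv.Perm.viaEmbedding_apply,
        Equiv.apply_symm_apply]
    rw [hsymm, e.injective.extend_apply, e.injective.extend_apply]
    rfl
  · have hfix : (Equiv.Perm.viaEmbeddingHom e σ).symm i = i := by
      rw [Equiv.symm_apply_eq, Equiv.Perm.viaEmbeddingHom_apply,
        Equiv.Perm.viaEmbedding_apply_of_notMem _ _ _ hi]
    rw [hfix, Function.extend_apply' _ _ _ hi, Function.extend_apply' _ _ _ hi]

theorem permRep_viaEmbedding_single_of_notMem {n m : ℕ} (e : Fin n ↪ Fin m)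
    (σ : Equiv.Perm (Fin n)) {b : Fin m} (hb : b ∉ Set.range e) :
    permRep m (Equiv.Perm.viaEmbeddingHom e σ) (Pi.single b 1) = Pi.single b 1 := by
  ext i
  simp only [permRep, MonoidHom.coe_mk, OneHom.coe_mk, LinearMap.funLeft_apply,
    Equiv.Perm.inv_def, Pi.single_apply, Equiv.symm_apply_eq, Equiv.Perm.viaEmbeddingHom_apply,
    Equiv.Perm.viaEmbedding_apply_of_notMem _ _ _ hb]

theorem eq_extendByZero_castSucc_add_smul_single_last {R : Type*} [Semiring R] {n : ℕ}
    (v : Fin (n + 1) → R) :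
    v = Function.ExtendByZero.linearMap R (Fin.castSuccEmb : Fin n ↪ Fin (n + 1)) (Fin.init v) +
      v (Fin.last n) • Pi.single (Fin.last n) 1 := by
  ext i
  refine Fin.lastCases ?_ (fun j => ?_) i
  · simp
  · simp [(Fin.castSucc_injective n).extend_apply, Fin.init]

/-- `ι_n` maps Lie elements to Lie elements: if `Grp_m(u) = Alg_m(u)` on `Λ^m ℂ^n` for
all `m ≤ n`, then `Grp_m(ι_n(u)) = Alg_m(ι_n(u))` on `Λ^m ℂ^{n+1}` for all `m ≤ n+1`. -/
theorem iotaAlg_lieElement (n : ℕ) (u : MonoidAlgebra ℂ (Equiv.Perm (Fin n)))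
    (hu : ∀ m ≤ n, GrpOp ℂ (permRep n) m u = AlgOp ℂ (permRep n) m u) :
    ∀ m ≤ n + 1,
      GrpOp ℂ (permRep (n + 1)) m (iotaAlg n u) =
        AlgOp ℂ (permRep (n + 1)) m (iotaAlg n u) := by
  intro m _
  have hLie : grpEnd (permRep n) u = algEnd (permRep n) u :=
    IsLieElement.grpEnd_eq_algEnd fun m hm => hu m (by simpa using hm)
  have hsum := sum_coeff_eq_zero_of_grpEnd_eq_algEnd hLie
  have hc (σ : Equiv.Perm (Fin n)) :
      permRep (n + 1) (Equiv.Perm.viaEmbeddingHom Fin.castSuccEmb σ) (Pi.single (Fin.last n) 1) =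
        Pi.single (Fin.last n) 1 :=
    permRep_viaEmbedding_single_of_notMem _ σ (by simp)
  have hf := extendByZero_comp_permRep (Fin.castSuccEmb : Fin n ↪ Fin (n + 1))
  rw [GrpOp_eq_AlgOp_iff]
  rintro y -
  obtain ⟨a, b, rfl⟩ := exists_eq_map_add_ι_mul_map
    (fun v => ⟨_, _, eq_extendByZero_castSucc_add_smul_single_last v⟩) y
  rw [iotaAlg, grpEnd_mapDomain, algEnd_mapDomain, map_add, map_add,
    grpEnd_ι_mul_of_fixed hc, algEnd_ι_mul_of_fixed hc, hsum, zero_smul, zero_add,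
    ← map_grpEnd_of_comp_eq hf, ← map_grpEnd_of_comp_eq hf, ← map_algEnd_of_comp_eq hf,
    ← map_algEnd_of_comp_eq hf, hLie]
end
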